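/- (Peak Lemma) Let H be a mesh in which every axis size is a prime number, and let σ_0 →^{allGather(i)} σ_1 →^{dynSlice(j,x)} σ_2 be a two-step sequence of collective operations between well-formed distributed types over H. Then there exists a sequence of at most three collective operations from σ_0 to σ_2 whose height is at most max(localsize(σ_0), localsize(σ_2)). -/

import Mathlib

/-! ## Meshes, index tuples, distributed dimensions and types -/

structure Mesh where
  axes : Finset String
  size : String → ℕ
  size_pos : ∀ x ∈ axes, 1 ≤ size x

def Mesh.hasAxis (H : Mesh) (x : String) (n : ℕ) : Prop :=
  x ∈ H.axes ∧ H.size x = n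

abbrev IndexTuple (H : Mesh) : Type :=
  {ι : String → ℕ // ∀ x : String, (x ∈ H.axes → ι x < H.size x) ∧ (x ∉ H.axes → ι x = 0)}

structure Dim where
  tile : ℕ
  axes : List String
  global : ℕ
deriving DecidableEq

abbrev DType := List Dim

def Mesh.WFDim (H : Mesh) (d : Dim) : Prop :=
  1 ≤ d.tile ∧ d.axes.Nodup ∧ (∀ x ∈ d.axes, x ∈ H.axes) ∧
    d.tile * (d.axes.map H.size).prod = d.global

def Mesh.WFType (H : Mesh) (τ : DType) : Prop :=
  (∀ d ∈ τ, H.WFDim d) ∧ List.Pairwise (fun d e => ∀ x ∈ d.axes, x ∉ e.axes) τ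

def globaltype (τ : DType) : List ℕ := τ.map Dim.global
def localtype (τ : DType) : List ℕ := τ.map Dim.tile
def localsize (τ : DType) : ℕ := (τ.map Dim.tile).prod

def typeAxes : DType → List String
  | [] => []
  | d :: τ => d.axes ++ typeAxes τ

/-- Base offset map of a distributed dimension, `⟦c{xs}n⟧_D`. -/
def dimOffset (H : Mesh) : ℕ → List String → (String → ℕ) → ℕ
  | _, [], _ => 0
  | c, x :: xs, ι => c * ι x + dimOffset H (c * H.size x) xs ι

abbrev BOM (H : Mesh) : Type := IndexTuple H → List ℕ

/-- Base offset map of a distributed type, `⟦τ⟧_T`. -/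
def typeOffset (H : Mesh) (τ : DType) : BOM H :=
  fun ι => τ.map (fun d => dimOffset H d.tile d.axes ι.val)

/-! ## Collective operations (high-level typing rules) -/

inductive Label where
  | allGather (i : ℕ)
  | dynSlice (i : ℕ) (x : String)
  | allToAll (i j : ℕ)
  | allPermute
deriving DecidableEq

inductive OpKind where
  | gather | slice | toAll | permute
deriving DecidableEq

def Label.kind : Label → OpKind
  | .allGather _ => .gather
  | .dynSlice _ _ => .slice
  | .allToAll _ _ => .toAll
  | .allPermute => .permute

inductive Step (H : Mesh) : Label → DType → DType → Prop where
  | allGather {τ : DType} (i : ℕ) {c : ℕ} {x : String} {xs : List String} {s n : ℕ}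
      (hwf : H.WFType τ) (hx : H.hasAxis x n)
      (hi : τ[i]? = some ⟨c, x :: xs, s⟩) :
      Step H (.allGather i) τ (τ.set i ⟨c * n, xs, s⟩)
  | dynSlice {τ : DType} (i : ℕ) (x : String) {c : ℕ} {xs : List String} {s n : ℕ}
      (hwf : H.WFType τ) (hx : H.hasAxis x n) (hfresh : x ∉ typeAxes τ)
      (hi : τ[i]? = some ⟨c * n, xs, s⟩) :
      Step H (.dynSlice i x) τ (τ.set i ⟨c, x :: xs, s⟩)
  | allToAll {τ : DType} (i j : ℕ) {ci : ℕ} {x : String} {xsi : List String} {si cj : ℕ}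
      {xsj : List String} {sj n : ℕ}
      (hwf : H.WFType τ) (hij : i ≠ j) (hx : H.hasAxis x n)
      (hi : τ[i]? = some ⟨ci, x :: xsi, si⟩)
      (hj : τ[j]? = some ⟨cj, xsj, sj⟩)
      (hdvd : n ∣ cj) :
      Step H (.allToAll i j) τ ((τ.set i ⟨ci * n, xsi, si⟩).set j ⟨cj / n, x :: xsj, sj⟩)
  | allPermute {τ₁ τ₂ : DType}
      (hwf1 : H.WFType τ₁) (hwf2 : H.WFType τ₂)
      (hl : localtype τ₁ = localtype τ₂) (hg : globaltype τ₁ = globaltype τ₂) :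
      Step H .allPermute τ₁ τ₂

/-! ## Sequences of collective operations -/

inductive CSeq (H : Mesh) : DType → DType → Type where
  | nil (τ : DType) : CSeq H τ τ
  | cons {τ₁ τ₂ τ₃ : DType} (p : Label) (h : Step H p τ₁ τ₂) (s : CSeq H τ₂ τ₃) : CSeq H τ₁ τ₃

def CSeq.labels {H : Mesh} : {τ₁ τ₂ : DType} → CSeq H τ₁ τ₂ → List Label
  | _, _, .nil _ => []
  | _, _, .cons p _ s => p :: s.labels

def CSeq.typesList {H : Mesh} : {τ₁ τ₂ : DType} → CSeq H τ₁ τ₂ → List DType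
  | _, _, .nil τ => [τ]
  | τ, _, .cons _ _ s => τ :: s.typesList

/-- The height 𝔥 of a sequence: the maximum `localsize` over all types in it. -/
def CSeq.height {H : Mesh} {τ₁ τ₂ : DType} (s : CSeq H τ₁ τ₂) : ℕ :=
  (s.typesList.map localsize).foldr max 0

/-- Cost of a single step with source `σ₁` and target `σ₂`. -/
def stepCost (p : Label) (σ₁ σ₂ : DType) : ℕ :=
  match p with
  | .allGather _ => localsize σ₂
  | .dynSlice _ _ => 0
  | .allToAll _ _ => localsize σ₁
  | .allPermute => localsize σ₁

def CSeq.cost {H : Mesh} : {τ₁ τ₂ : DType} → CSeq H τ₁ τ₂ → ℕ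
  | _, _, .nil _ => 0
  | _, _, @CSeq.cons _ σ₁ σ₂ _ p _ s => stepCost p σ₁ σ₂ + s.cost

/-- Normal form: labels matched by `dynSlice* {allToAll | allPermute}* allGather*`. -/
def NormalFormK (ks : List OpKind) : Prop :=
  ∃ a b c : List OpKind, ks = a ++ b ++ c ∧
    (∀ k ∈ a, k = OpKind.slice) ∧
    (∀ k ∈ b, k = OpKind.toAll ∨ k = OpKind.permute) ∧
    (∀ k ∈ c, k = OpKind.gather)

/-! ## Weak collectives -/

/-- Equivalence of base offset maps. -/
def bomEquiv (H : Mesh) (β₁ β₂ : BOM H) : Prop :=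
  ∃ π : Equiv.Perm (IndexTuple H), β₂ = β₁ ∘ π

/-- The weak collective relation `⟦τ₁⟧_E ▶^p ⟦τ₂⟧_E`, represented on types. -/
def WeakStep (H : Mesh) (p : Label) (τ₁ τ₂ : DType) : Prop :=
  p ≠ Label.allPermute ∧ H.WFType τ₁ ∧ H.WFType τ₂ ∧
  ∃ σ₁ σ₂ : DType, Step H p σ₁ σ₂ ∧
    bomEquiv H (typeOffset H σ₁) (typeOffset H τ₁) ∧
    bomEquiv H (typeOffset H σ₂) (typeOffset H τ₂)

inductive WkSeq (H : Mesh) : DType → DType → Type where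
  | nil (τ : DType) : WkSeq H τ τ
  | cons {τ₁ τ₂ τ₃ : DType} (p : Label) (h : WeakStep H p τ₁ τ₂) (s : WkSeq H τ₂ τ₃) :
      WkSeq H τ₁ τ₃

def WkSeq.labels {H : Mesh} : {τ₁ τ₂ : DType} → WkSeq H τ₁ τ₂ → List Label
  | _, _, .nil _ => []
  | _, _, .cons p _ s => p :: s.labels

def WkSeq.typesList {H : Mesh} : {τ₁ τ₂ : DType} → WkSeq H τ₁ τ₂ → List DType
  | _, _, .nil τ => [τ]
  | τ, _, .cons _ _ s => τ :: s.typesList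

def WkSeq.height {H : Mesh} {τ₁ τ₂ : DType} (s : WkSeq H τ₁ τ₂) : ℕ :=
  (s.typesList.map localsize).foldr max 0

def WkSeq.cost {H : Mesh} : {τ₁ τ₂ : DType} → WkSeq H τ₁ τ₂ → ℕ
  | _, _, .nil _ => 0
  | _, _, @WkSeq.cons _ σ₁ σ₂ _ p _ s => stepCost p σ₁ σ₂ + s.cost

/-! ## Low-level MPI-style collectives on device assignments -/

abbrev DevMap (H : Mesh) (D : Type) := IndexTuple H ≃ D

structure DevAssign (H : Mesh) (D : Type) where
  dmap : DevMap H D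
  bom : BOM H

inductive LLabel where
  | allGather (x : String)
  | allToAll (x : String) (j : ℕ)
  | dynSlice (i : ℕ) (x : String)
  | allPermute
deriving DecidableEq

def LLabel.kind : LLabel → OpKind
  | .allGather _ => .gather
  | .allToAll _ _ => .toAll
  | .dynSlice _ _ => .slice
  | .allPermute => .permute

inductive LStep (H : Mesh) (D : Type) : LLabel → DevAssign H D → DevAssign H D → Type where
  | gather (τ : DType) (i : ℕ) (c : ℕ) (ys : List String) (x : String) (xs : List String)
      (s n : ℕ) (φ φ' : DevMap H D)
      (hwf : H.WFType τ) (hx : H.hasAxis x n)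
      (hi : τ[i]? = some ⟨c, ys ++ x :: xs, s⟩)
      (hmap : typeOffset H (τ.set i ⟨c, x :: (ys ++ xs), s⟩) ∘ ⇑φ'.symm
            = typeOffset H τ ∘ ⇑φ.symm) :
      LStep H D (.allGather x) ⟨φ, typeOffset H τ⟩
        ⟨φ', typeOffset H (τ.set i ⟨c * n, ys ++ xs, s⟩)⟩
  | toAll (τ : DType) (i j : ℕ) (ci : ℕ) (ys : List String) (x : String) (xs : List String)
      (si cj : ℕ) (xsj : List String) (sj n : ℕ) (φ φ' : DevMap H D)
      (hwf : H.WFType τ) (hij : i ≠ j) (hx : H.hasAxis x n)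
      (hi : τ[i]? = some ⟨ci, ys ++ x :: xs, si⟩)
      (hj : τ[j]? = some ⟨cj, xsj, sj⟩)
      (hdvd : n ∣ cj)
      (hmap : typeOffset H (τ.set i ⟨ci, x :: (ys ++ xs), si⟩) ∘ ⇑φ'.symm
            = typeOffset H τ ∘ ⇑φ.symm) :
      LStep H D (.allToAll x j) ⟨φ, typeOffset H τ⟩
        ⟨φ', typeOffset H ((τ.set i ⟨ci * n, ys ++ xs, si⟩).set j ⟨cj / n, x :: xsj, sj⟩)⟩
  | slice (τ : DType) (i : ℕ) (x : String) (c : ℕ) (xs : List String) (s n : ℕ)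
      (φ : DevMap H D)
      (hwf : H.WFType τ) (hx : H.hasAxis x n) (hfresh : x ∉ typeAxes τ)
      (hi : τ[i]? = some ⟨c * n, xs, s⟩) :
      LStep H D (.dynSlice i x) ⟨φ, typeOffset H τ⟩ ⟨φ, typeOffset H (τ.set i ⟨c, x :: xs, s⟩)⟩
  | permute (τ : DType) (ρ : Equiv.Perm (IndexTuple H)) (β' : BOM H)
      (φ φ' : DevMap H D) (π : Equiv.Perm D)
      (hwf : H.WFType τ)
      (hmap : β' ∘ ⇑φ'.symm = (typeOffset H τ ∘ ⇑ρ) ∘ ⇑φ.symm ∘ ⇑π) :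
      LStep H D .allPermute ⟨φ, typeOffset H τ ∘ ⇑ρ⟩ ⟨φ', β'⟩

def LStep.cost {H : Mesh} {D : Type} :
    {l : LLabel} → {a b : DevAssign H D} → LStep H D l a b → ℕ
  | _, _, _, .gather τ i c ys x xs s n .. => localsize (τ.set i ⟨c * n, ys ++ xs, s⟩)
  | _, _, _, .toAll τ .. => localsize τ
  | _, _, _, .slice .. => 0
  | _, _, _, .permute τ .. => localsize τ

inductive LoSeq (H : Mesh) (D : Type) : DevAssign H D → DevAssign H D → Type where
  | nil (a : DevAssign H D) : LoSeq H D a a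
  | cons {a b c : DevAssign H D} (l : LLabel) (st : LStep H D l a b) (s : LoSeq H D b c) :
      LoSeq H D a c

def LoSeq.labels {H : Mesh} {D : Type} : {a b : DevAssign H D} → LoSeq H D a b → List LLabel
  | _, _, .nil _ => []
  | _, _, .cons l _ s => l :: s.labels

def LoSeq.states {H : Mesh} {D : Type} : {a b : DevAssign H D} → LoSeq H D a b → List (DevAssign H D)
  | _, _, .nil a => [a]
  | a, _, .cons _ _ s => a :: s.states

def LoSeq.cost {H : Mesh} {D : Type} : {a b : DevAssign H D} → LoSeq H D a b → ℕ
  | _, _, .nil _ => 0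
  | _, _, .cons _ st s => st.cost + s.cost

/-!
After `allGather(i)` drops the leading axis `y : n` of dimension `i`, `dynSlice(j, x)` with
`x : m` prepends `x` to dimension `j`. If `j ≠ i` the two operations touch different dimensions,
so slicing first and gathering afterwards (or a single `allToAll(i, j)` when `x = y`) avoids the
peak. If `j = i` the tile changes from `c` to `c * n / m`: for `n = m` this is one `allPermute`
renaming `y` to `x`; otherwise, `n` and `m` being distinct primes, `m ∣ c`, so we may slice by `x`
first, swap `x` and `y` with an `allPermute`, and gather `y` last; the intermediate types are then
no larger than `σ₀`.
-/

theorem Mesh.hasAxis.size_pos {H : Mesh} {x : String} {n : ℕ} (hx : H.hasAxis x n) : 0 < n :=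
  hx.2 ▸ H.size_pos x hx.1

theorem List.exists_append_cons_of_getElem?_eq_some {α : Type*} {l : List α} {i : ℕ} {a : α}
    (h : l[i]? = some a) :
    ∃ l₁ l₂, l = l₁ ++ a :: l₂ ∧ ∀ b, l.set i b = l₁ ++ b :: l₂ := by
  obtain ⟨hi, rfl⟩ := List.getElem?_eq_some_iff.mp h
  refine ⟨l.take i, l.drop (i + 1), by simp, fun b => ?_⟩
  exact List.set_eq_take_append_cons_drop.trans (if_pos hi)

theorem typeAxes_eq_flatMap (τ : DType) : typeAxes τ = τ.flatMap Dim.axes := by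
  induction τ with
  | nil => rfl
  | cons d τ ih => simp [typeAxes, ih]

theorem mem_typeAxes {τ : DType} {z : String} :
    z ∈ typeAxes τ ↔ ∃ d ∈ τ, z ∈ d.axes := by
  simp [typeAxes_eq_flatMap]

theorem mem_typeAxes_set {τ : DType} {i : ℕ} {d d' : Dim} {z : String} (hi : τ[i]? = some d)
    (hz : z ∈ typeAxes τ) (hd : z ∈ d.axes → z ∈ d'.axes) :
    z ∈ typeAxes (τ.set i d') := by
  obtain ⟨l₁, l₂, rfl, hset⟩ := List.exists_append_cons_of_getElem?_eq_some hi
  rw [hset]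
  simp only [typeAxes_eq_flatMap, List.flatMap_append, List.flatMap_cons, List.mem_append] at hz ⊢
  tauto

theorem localsize_set_le {τ : DType} {i : ℕ} {d d' : Dim} (hi : τ[i]? = some d)
    (h : d'.tile ≤ d.tile) : localsize (τ.set i d') ≤ localsize τ := by
  obtain ⟨l₁, l₂, rfl, hset⟩ := List.exists_append_cons_of_getElem?_eq_some hi
  rw [hset]
  simp only [localsize, List.map_append, List.map_cons, List.prod_append, List.prod_cons]
  gcongr

theorem localtype_set {τ : DType} {i : ℕ} {d d' : Dim} (hi : τ[i]? = some d)
    (h : d'.tile = d.tile) : localtype (τ.set i d') = localtype τ := by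
  obtain ⟨l₁, l₂, rfl, hset⟩ := List.exists_append_cons_of_getElem?_eq_some hi
  simp [hset, localtype, h]

theorem globaltype_set {τ : DType} {i : ℕ} {d d' : Dim} (hi : τ[i]? = some d)
    (h : d'.global = d.global) : globaltype (τ.set i d') = globaltype τ := by
  obtain ⟨l₁, l₂, rfl, hset⟩ := List.exists_append_cons_of_getElem?_eq_some hi
  simp [hset, globaltype, h]

namespace Mesh

variable {H : Mesh}

theorem WFDim.slice {c n : ℕ} {x : String} {xs : List String} {s : ℕ}
    (hd : H.WFDim ⟨c * n, xs, s⟩) (hx : H.hasAxis x n) (hxs : x ∉ xs) :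
    H.WFDim ⟨c, x :: xs, s⟩ := by
  obtain ⟨hpos, hnd, hax, hprod⟩ := hd
  refine ⟨Nat.pos_of_mul_pos_right hpos, List.nodup_cons.mpr ⟨hxs, hnd⟩, ?_, ?_⟩
  · simpa [hx.1] using hax
  · simpa [hx.2, mul_assoc] using hprod

theorem WFDim.gather {c n : ℕ} {x : String} {xs : List String} {s : ℕ}
    (hd : H.WFDim ⟨c, x :: xs, s⟩) (hx : H.hasAxis x n) : H.WFDim ⟨c * n, xs, s⟩ := by
  obtain ⟨hpos, hnd, hax, hprod⟩ := hd
  refine ⟨?_, (List.nodup_cons.mp hnd).2, fun z hz => hax z (List.mem_cons_of_mem x hz), ?_⟩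
  · exact Nat.mul_pos hpos hx.size_pos
  · simpa [hx.2, mul_assoc] using hprod

theorem WFDim.perm {c s : ℕ} {xs ys : List String} (hd : H.WFDim ⟨c, xs, s⟩)
    (h : xs.Perm ys) : H.WFDim ⟨c, ys, s⟩ := by
  obtain ⟨hpos, hnd, hax, hprod⟩ := hd
  exact ⟨hpos, h.nodup_iff.mp hnd, fun z hz => hax z (h.mem_iff.mpr hz),
    (h.map H.size).prod_eq ▸ hprod⟩

theorem WFType.set {τ : DType} {i : ℕ} {d d' : Dim} (hwf : H.WFType τ) (hi : τ[i]? = some d)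
    (hd' : H.WFDim d') (hax : ∀ z ∈ d'.axes, z ∈ d.axes ∨ z ∉ typeAxes τ) :
    H.WFType (τ.set i d') := by
  obtain ⟨l₁, l₂, rfl, hset⟩ := List.exists_append_cons_of_getElem?_eq_some hi
  rw [hset]
  simp only [typeAxes_eq_flatMap, List.mem_flatMap, List.mem_append, List.mem_cons] at hax
  simp only [WFType, List.mem_append, List.mem_cons, List.pairwise_append,
    List.pairwise_cons] at hwf ⊢
  grind

theorem WFType.dynSlice {τ : DType} {i c n s : ℕ} {x : String}
    {xs : List String} (hwf : H.WFType τ) (hx : H.hasAxis x n) (hfresh : x ∉ typeAxes τ)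
    (hi : τ[i]? = some ⟨c * n, xs, s⟩) : H.WFType (τ.set i ⟨c, x :: xs, s⟩) := by
  have hxs : x ∉ xs := fun hmem =>
    hfresh (mem_typeAxes.mpr ⟨_, List.mem_of_getElem? hi, hmem⟩)
  refine hwf.set hi ((hwf.1 _ (List.mem_of_getElem? hi)).slice hx hxs) ?_
  rintro z (_ | ⟨_, hz⟩)
  · exact Or.inr hfresh
  · exact Or.inl hz

end Mesh

theorem Step.allPermute_set {H : Mesh} {τ : DType} {i : ℕ} {d d' : Dim} (hwf : H.WFType τ)
    (hi : τ[i]? = some d) (hd' : H.WFDim d')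
    (hax : ∀ z ∈ d'.axes, z ∈ d.axes ∨ z ∉ typeAxes τ)
    (htile : d'.tile = d.tile) (hglobal : d'.global = d.global) :
    Step H .allPermute τ (τ.set i d') :=
  .allPermute hwf (hwf.set hi hd' hax) (localtype_set hi htile).symm
    (globaltype_set hi hglobal).symm

namespace CSeq

variable {H : Mesh}

@[simp]
theorem height_nil (τ : DType) : (CSeq.nil (H := H) τ).height = localsize τ :=
  max_eq_left (Nat.zero_le _)

@[simp]
theorem height_cons {τ₁ τ₂ τ₃ : DType} (p : Label) (h : Step H p τ₁ τ₂)
    (s : CSeq H τ₂ τ₃) :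
    (CSeq.cons p h s).height = max (localsize τ₁) s.height :=
  rfl

@[simp]
theorem labels_nil (τ : DType) : (CSeq.nil (H := H) τ).labels = [] := rfl

@[simp]
theorem labels_cons {τ₁ τ₂ τ₃ : DType} (p : Label) (h : Step H p τ₁ τ₂)
    (s : CSeq H τ₂ τ₃) :
    (CSeq.cons p h s).labels = p :: s.labels :=
  rfl

end CSeq

section Peak

variable {H : Mesh} {τ : DType} {i c s n m : ℕ} {x y : String} {ys : List String}

theorem Step.allPermute_rename (hwf : H.WFType τ) (hi : τ[i]? = some ⟨c, y :: ys, s⟩)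
    (hy : H.hasAxis y n) (hx : H.hasAxis x n) (hfresh : x ∉ typeAxes τ) :
    Step H .allPermute τ (τ.set i ⟨c, x :: ys, s⟩) := by
  have hmem := List.mem_of_getElem? hi
  have hxys : x ∉ ys := fun hmem' =>
    hfresh (mem_typeAxes.mpr ⟨_, hmem, List.mem_cons_of_mem y hmem'⟩)
  refine Step.allPermute_set hwf hi (((hwf.1 _ hmem).gather hy).slice hx hxys) ?_ rfl rfl
  rintro z (_ | ⟨_, hz⟩)
  · exact Or.inr hfresh
  · exact Or.inl (List.mem_cons_of_mem y hz)

theorem exists_cseq_slice_swap_gather (hwf : H.WFType τ)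
    (hi : τ[i]? = some ⟨c * m, y :: ys, s⟩) (hy : H.hasAxis y n) (hx : H.hasAxis x m)
    (hfresh : x ∉ typeAxes τ) :
    ∃ t : CSeq H τ (τ.set i ⟨c * n, x :: ys, s⟩), t.labels.length ≤ 3 ∧
      t.height ≤ max (localsize τ) (localsize (τ.set i ⟨c * n, x :: ys, s⟩)) := by
  have hlen : i < τ.length := (List.getElem?_eq_some_iff.mp hi).1
  have hwf₁ := hwf.dynSlice hx hfresh hi
  have hi₁ : (τ.set i ⟨c, x :: y :: ys, s⟩)[i]? = some ⟨c, x :: y :: ys, s⟩ :=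
    List.getElem?_set_self (by simpa using hlen)
  have hd₂ : H.WFDim ⟨c, y :: x :: ys, s⟩ :=
    (hwf₁.1 _ (List.mem_of_getElem? hi₁)).perm (List.Perm.swap y x ys)
  have hax₂ : ∀ z ∈ y :: x :: ys,
      z ∈ x :: y :: ys ∨ z ∉ typeAxes (τ.set i ⟨c, x :: y :: ys, s⟩) :=
    fun z hz => Or.inl ((List.Perm.swap x y ys).mem_iff.mp hz)
  have slice := Step.dynSlice i x hwf hx hfresh hi
  have swap := Step.allPermute_set hwf₁ hi₁ hd₂ hax₂ rfl rfl
  rw [List.set_set] at swap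
  have gather := Step.allGather i (hwf₁.set hi₁ hd₂ hax₂) hy
    (List.getElem?_set_self (by simpa using hlen))
  rw [List.set_set, List.set_set] at gather
  refine ⟨.cons _ slice (.cons _ swap (.cons _ gather (.nil _))), by simp, ?_⟩
  have hc : c ≤ c * m := Nat.le_mul_of_pos_right c hx.size_pos
  simp only [CSeq.height_cons, CSeq.height_nil, max_le_iff]
  exact ⟨le_max_left _ _, (localsize_set_le hi hc).trans (le_max_left _ _),
    (localsize_set_le hi hc).trans (le_max_left _ _), le_max_right _ _⟩

theorem exists_cseq_replace_leading_axis (hn : n.Prime) (hm : m.Prime) {c' : ℕ}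
    (hwf : H.WFType τ) (hi : τ[i]? = some ⟨c, y :: ys, s⟩) (hy : H.hasAxis y n)
    (hx : H.hasAxis x m) (hfresh : x ∉ typeAxes τ) (hc : c * n = c' * m) :
    ∃ t : CSeq H τ (τ.set i ⟨c', x :: ys, s⟩), t.labels.length ≤ 3 ∧
      t.height ≤ max (localsize τ) (localsize (τ.set i ⟨c', x :: ys, s⟩)) := by
  rcases eq_or_ne m n with rfl | hmn
  · obtain rfl : c = c' := Nat.eq_of_mul_eq_mul_right hm.pos hc
    exact ⟨.cons _ (Step.allPermute_rename hwf hi hy hx hfresh) (.nil _), by simp, by simp⟩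
  · have hmc : m ∣ c := ((Nat.Prime.dvd_mul hm).mp (hc ▸ dvd_mul_left m c')).resolve_right
      fun h => hmn ((Nat.prime_dvd_prime_iff_eq hm hn).mp h)
    obtain ⟨c₀, rfl⟩ := hmc
    obtain rfl : c₀ * n = c' := Nat.eq_of_mul_eq_mul_right hm.pos (by rw [← hc]; ring)
    rw [mul_comm m c₀] at hi
    exact exists_cseq_slice_swap_gather hwf hi hy hx hfresh

theorem exists_cseq_slice_gather {j c' : ℕ} {zs : List String} {s' : ℕ} (hij : i ≠ j)
    (hwf : H.WFType τ) (hi : τ[i]? = some ⟨c, y :: ys, s⟩) (hy : H.hasAxis y n)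
    (hj : τ[j]? = some ⟨c' * m, zs, s'⟩) (hx : H.hasAxis x m) (hfresh : x ∉ typeAxes τ) :
    ∃ t : CSeq H τ ((τ.set j ⟨c', x :: zs, s'⟩).set i ⟨c * n, ys, s⟩),
      t.labels.length ≤ 3 ∧
      t.height ≤ max (localsize τ)
        (localsize ((τ.set j ⟨c', x :: zs, s'⟩).set i ⟨c * n, ys, s⟩)) := by
  have slice := Step.dynSlice j x hwf hx hfresh hj
  have gather := Step.allGather i (hwf.dynSlice hx hfresh hj) hy
    (by rwa [List.getElem?_set_ne (Ne.symm hij)])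
  refine ⟨.cons _ slice (.cons _ gather (.nil _)), by simp, ?_⟩
  have hc' : c' ≤ c' * m := Nat.le_mul_of_pos_right c' hx.size_pos
  simp only [CSeq.height_cons, CSeq.height_nil, max_le_iff]
  exact ⟨le_max_left _ _, (localsize_set_le hj hc').trans (le_max_left _ _), le_max_right _ _⟩

theorem notMem_typeAxes_of_set_tail {c' s' : ℕ} (hi : τ[i]? = some ⟨c, y :: ys, s⟩)
    (hxy : x ≠ y) (hfresh : x ∉ typeAxes (τ.set i ⟨c', ys, s'⟩)) : x ∉ typeAxes τ :=
  fun hx => hfresh (mem_typeAxes_set hi hx fun hx' => (List.mem_cons.mp hx').resolve_left hxy)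

end Peak

/-- Peak Lemma. -/
theorem stmt2 (H : Mesh) (hP : ∀ x ∈ H.axes, (H.size x).Prime)
    (σ₀ σ₁ σ₂ : DType) (i j : ℕ) (x : String)
    (h1 : Step H (.allGather i) σ₀ σ₁) (h2 : Step H (.dynSlice j x) σ₁ σ₂) :
    ∃ s : CSeq H σ₀ σ₂,
      s.labels.length ≤ 3 ∧ s.height ≤ max (localsize σ₀) (localsize σ₂) := by
  cases h1 with | @allGather _ _ c y ys s n hwf hy hi => ?_
  cases h2 with | @dynSlice _ _ _ c' zs s' m _ hx hfresh hj => ?_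
  rcases eq_or_ne i j with rfl | hij
  · have hlen : i < σ₀.length := (List.getElem?_eq_some_iff.mp hi).1
    rw [List.getElem?_set_self (by simpa using hlen)] at hj
    obtain ⟨hc, rfl, rfl⟩ : c * n = c' * m ∧ ys = zs ∧ s = s' := by simpa [eq_comm] using hj
    rw [List.set_set]
    rcases eq_or_ne x y with rfl | hxy
    · obtain rfl : m = n := hx.2.symm.trans hy.2
      obtain rfl : c = c' := Nat.eq_of_mul_eq_mul_right hx.size_pos hc
      rw [← (List.getElem?_eq_some_iff.mp hi).2, List.set_getElem_self]
      exact ⟨.nil _, by simp, by simp⟩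
    · exact exists_cseq_replace_leading_axis (hy.2 ▸ hP y hy.1) (hx.2 ▸ hP x hx.1) hwf hi hy hx
        (notMem_typeAxes_of_set_tail hi hxy hfresh) hc
  · rw [List.getElem?_set_ne hij] at hj
    rcases eq_or_ne x y with rfl | hxy
    · obtain rfl : m = n := hx.2.symm.trans hy.2
      have swap := Step.allToAll i j hwf hij hy hi hj (dvd_mul_left m c')
      rw [Nat.mul_div_cancel c' hx.size_pos] at swap
      exact ⟨.cons _ swap (.nil _), by simp, by simp⟩
    · rw [List.set_comm _ _ hij]
      exact exists_cseq_slice_gather hij hwf hi hy hj hx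
        (notMem_typeAxes_of_set_tail hi hxy hfresh)
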